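/- Let W : [0,∞) → ℝ be C¹ with W(0) = 0 and W(s) ≥ 0 for all s ≥ 0. If U ∈ H^1(ℝ^N) ∩ C²(ℝ^N), N ≥ 3, is a radial solution of -ΔU + W'(U) = 2ωU with ω ≤ 0 decaying at infinity along with its gradient, then U ≡ 0. -/

import Mathlib

/-!
Write `u(r) = U(r e)` for a unit vector `e`. For a radial `C²` function the Laplacian at `r e`,
`r > 0`, is `u''(r) + (N - 1) u'(r) / r`, so `u'' + (N - 1) u' / r = -f(u)` with
`f(s) = 2ωs - W'(s)`, the derivative of `F(s) = ωs² - W(s)`. Along this ODE the energy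
`E = u'²/2 + F(u)` satisfies `E' = -(N - 1) u'² / r ≤ 0`, and `E(r) → 0` as `r → ∞` by the decay
of `U` and `∇U`, so `E ≥ 0` on `[0, ∞)`. Since `u` is even, `u'(0) = 0` and
`E(0) = F(u(0)) ≤ 0` because `ω ≤ 0 ≤ W(u(0))`. Hence `E ≡ 0`, which forces `u' = 0` on `(0, ∞)`,
and `u` is the constant `lim u = 0`.
-/

open MeasureTheory Real Filter

/-- The Laplacian of a (twice differentiable) function on `ℝ^N`. -/
noncomputable def lapR (N : ℕ) (f : EuclideanSpace ℝ (Fin N) → ℝ)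
    (x : EuclideanSpace ℝ (Fin N)) : ℝ :=
  ∑ j : Fin N, iteratedFDeriv ℝ 2 f x ![EuclideanSpace.single j 1, EuclideanSpace.single j 1]

open Set Topology

theorem HasDerivAt.eq_zero_of_even {g : ℝ → ℝ} {d : ℝ} (hg : HasDerivAt g d 0)
    (heven : ∀ x, g (-x) = g x) : d = 0 := by
  have hneg : HasDerivAt (fun x => g (-x)) (d * -1) 0 :=
    (neg_zero (G := ℝ) ▸ hg).comp 0 (hasDerivAt_neg 0)
  rw [funext heven] at hneg
  linarith [hneg.unique hg]

theorem AntitoneOn.eqOn_const_of_tendsto {α β : Type*} [SemilatticeSup α] [Nonempty α]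
    [PartialOrder β] [TopologicalSpace β] [OrderClosedTopology β] {g : α → β} {a : α} {l : β}
    (hg : AntitoneOn g (Ici a)) (ha : g a ≤ l) (hlim : Tendsto g atTop (𝓝 l)) :
    EqOn g (fun _ => l) (Ici a) := by
  intro r hr
  have hge : l ≤ g r := le_of_tendsto hlim <| by
    filter_upwards [eventually_ge_atTop r] with s hs using hg hr (le_trans hr hs) hs
  exact le_antisymm (le_trans (hg self_mem_Ici hr hr) ha) hge

theorem eqOn_const_of_hasDerivAt_zero {u : ℝ → ℝ} {a l : ℝ} (hcont : ContinuousOn u (Ici a))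
    (hu : ∀ r > a, HasDerivAt u 0 r) (hlim : Tendsto u atTop (𝓝 l)) :
    EqOn u (fun _ => l) (Ici a) := by
  have hderiv : ∀ r ∈ interior (Ici a), HasDerivWithinAt u 0 (interior (Ici a)) r := by
    rw [interior_Ici]
    exact fun r hr => (hu r hr).hasDerivWithinAt
  have hanti := antitoneOn_of_hasDerivWithinAt_nonpos (convex_Ici a) hcont hderiv
    (fun _ _ => le_rfl)
  have hmono := monotoneOn_of_hasDerivWithinAt_nonneg (convex_Ici a) hcont hderiv
    (fun _ _ => le_rfl)
  intro r hr
  refine tendsto_nhds_unique (tendsto_const_nhds.congr' ?_) hlim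
  filter_upwards [eventually_ge_atTop r] with s hs
  exact le_antisymm (hmono hr (hr.trans hs) hs) (hanti hr (hr.trans hs) hs)

section RadialODE

variable {F f u u' : ℝ → ℝ} {c : ℝ}

noncomputable def radialEnergy (F u u' : ℝ → ℝ) (r : ℝ) : ℝ := u' r ^ 2 / 2 + F (u r)

theorem hasDerivAt_radialEnergy {r : ℝ} (hF : HasDerivAt F (f (u r)) (u r))
    (hu : HasDerivAt u (u' r) r) (hu' : HasDerivAt u' (-f (u r) - c * u' r / r) r) :
    HasDerivAt (radialEnergy F u u') (-(c * u' r ^ 2 / r)) r :=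
  (((hu'.pow 2).div_const 2).add (hF.comp r hu)).congr_deriv (by ring)

theorem radialEnergy_antitoneOn (hc : 0 ≤ c) (hF : ∀ s, HasDerivAt F (f s) s)
    (hu : ∀ r, HasDerivAt u (u' r) r) (hu'c : ContinuousOn u' (Ici 0))
    (hu' : ∀ r > 0, HasDerivAt u' (-f (u r) - c * u' r / r) r) :
    AntitoneOn (radialEnergy F u u') (Ici 0) := by
  have hFc : Continuous F := continuous_iff_continuousAt.2 fun s => (hF s).continuousAt
  have hcont : ContinuousOn (radialEnergy F u u') (Ici 0) :=
    ((hu'c.pow 2).div_const 2).add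
      (hFc.comp_continuousOn fun r _ => (hu r).continuousAt.continuousWithinAt)
  refine antitoneOn_of_hasDerivWithinAt_nonpos (convex_Ici 0) hcont
    (f' := fun r => -(c * u' r ^ 2 / r)) ?_ ?_ <;> rw [interior_Ici] <;> intro r (hr : 0 < r)
  · exact (hasDerivAt_radialEnergy (hF _) (hu r) (hu' r hr)).hasDerivWithinAt
  · have : 0 ≤ c * u' r ^ 2 / r := by positivity
    linarith

theorem eqOn_zero_of_radial_ode (hc : 0 < c) (hF : ∀ s, HasDerivAt F (f s) s) (hF0 : F 0 = 0)
    (hu : ∀ r, HasDerivAt u (u' r) r) (hu'c : ContinuousOn u' (Ici 0))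
    (hu' : ∀ r > 0, HasDerivAt u' (-f (u r) - c * u' r / r) r) (hu'0 : u' 0 = 0)
    (hFu0 : F (u 0) ≤ 0) (hu_lim : Tendsto u atTop (𝓝 0)) (hu'_lim : Tendsto u' atTop (𝓝 0)) :
    EqOn u 0 (Ici 0) := by
  have hE0 : radialEnergy F u u' 0 ≤ 0 := by simpa [radialEnergy, hu'0] using hFu0
  have hE_lim : Tendsto (radialEnergy F u u') atTop (𝓝 0) := by
    show Tendsto (fun r => u' r ^ 2 / 2 + F (u r)) atTop (𝓝 0)
    simpa [hF0] using ((hu'_lim.pow 2).div_const 2).add ((hF 0).continuousAt.tendsto.comp hu_lim)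
  have hE := (radialEnergy_antitoneOn hc.le hF hu hu'c hu').eqOn_const_of_tendsto hE0 hE_lim
  have hu'_zero : ∀ r > 0, u' r = 0 := by
    intro r hr
    have hE_loc : radialEnergy F u u' =ᶠ[𝓝 r] fun _ => 0 :=
      eventually_of_mem (Ioi_mem_nhds hr) fun s hs => hE (mem_Ici.2 (le_of_lt hs))
    have h := (hasDerivAt_radialEnergy (hF _) (hu r) (hu' r hr)).unique
      ((hasDerivAt_const r 0).congr_of_eventuallyEq hE_loc)
    simpa [hc.ne', hr.ne'] using h
  exact eqOn_const_of_hasDerivAt_zero (fun r _ => (hu r).continuousAt.continuousWithinAt)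
    (fun r hr => hu'_zero r hr ▸ hu r) hu_lim

end RadialODE

section LineDerivative

variable {E G : Type*} [NormedAddCommGroup E] [NormedSpace ℝ E] [NormedAddCommGroup G]
  [NormedSpace ℝ G]

theorem HasFDerivAt.hasDerivAt_comp_add_smul {g : E → G} {g' : E →L[ℝ] G} {p v : E} {t : ℝ}
    (hg : HasFDerivAt g g' (p + t • v)) : HasDerivAt (fun s : ℝ => g (p + s • v)) (g' v) t :=
  hg.comp_hasDerivAt t <| by simpa using ((hasDerivAt_id t).smul_const v).const_add p

theorem HasFDerivAt.hasDerivAt_comp_smul {g : E → G} {g' : E →L[ℝ] G} {v : E} {t : ℝ}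
    (hg : HasFDerivAt g g' (t • v)) : HasDerivAt (fun s : ℝ => g (s • v)) (g' v) t :=
  hg.comp_hasDerivAt t <| by simpa using (hasDerivAt_id t).smul_const v

theorem ContDiff.hasDerivAt_fderiv_apply_comp_add_smul {g : E → G} (hg : ContDiff ℝ 2 g)
    (p v w : E) (t : ℝ) :
    HasDerivAt (fun s : ℝ => fderiv ℝ g (p + s • v) w)
      (fderiv ℝ (fderiv ℝ g) (p + t • v) v w) t := by
  have hD := ((hg.fderiv_right (m := 1) (by norm_num)).differentiable one_ne_zero
    (p + t • v)).hasFDerivAt.hasDerivAt_comp_add_smul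
  simpa using hD.clm_apply (hasDerivAt_const t w)

end LineDerivative

section Radial

open RealInnerProductSpace

variable {E : Type*} [NormedAddCommGroup E] [InnerProductSpace ℝ E] {U : E → ℝ} {e v : E}

theorem apply_eq_apply_norm_smul (hrad : ∀ x y : E, ‖x‖ = ‖y‖ → U x = U y) (he : ‖e‖ = 1)
    (x : E) : U x = U (‖x‖ • e) :=
  hrad _ _ (by simp [norm_smul, he])

theorem norm_smul_add_smul_of_inner_eq_zero (he : ‖e‖ = 1) (hv : ‖v‖ = 1) (hev : ⟪e, v⟫ = 0)
    (r s : ℝ) : ‖r • e + s • v‖ = √(r ^ 2 + s ^ 2) := by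
  have h : ⟪r • e, s • v⟫ = 0 := by simp [real_inner_smul_left, real_inner_smul_right, hev]
  rw [eq_comm, sqrt_eq_iff_mul_self_eq (by positivity) (norm_nonneg _),
    norm_add_sq_eq_norm_sq_add_norm_sq_real h]
  simp [norm_smul, he, hv]
  ring

theorem fderiv_fderiv_apply_of_inner_eq_zero (hU : ContDiff ℝ 2 U)
    (hrad : ∀ x y : E, ‖x‖ = ‖y‖ → U x = U y) (he : ‖e‖ = 1) (hv : ‖v‖ = 1) (hev : ⟪e, v⟫ = 0)
    {r : ℝ} (hr : 0 < r) :
    fderiv ℝ (fderiv ℝ U) (r • e) v v = fderiv ℝ U (r • e) e / r := by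
  set u' : ℝ → ℝ := fun t => fderiv ℝ U (t • e) e
  set ρ : ℝ → ℝ := fun s => √(r ^ 2 + s ^ 2)
  have hρ_pos : ∀ s, 0 < r ^ 2 + s ^ 2 := fun s => by positivity
  have hρ : ∀ s, HasDerivAt ρ (s / ρ s) s := fun s =>
    (((hasDerivAt_pow 2 s).const_add (r ^ 2)).sqrt (hρ_pos s).ne').congr_deriv (by
      simp only [ρ]; field_simp; ring)
  have hρ0 : ρ 0 = r := by simp [ρ, sqrt_sq hr.le]
  -- along the line `s ↦ r e + s v` the function `U` is `u ∘ ρ`, with `u t = U (t e)`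
  have hline : ∀ s, fderiv ℝ U (r • e + s • v) v = s * (u' (ρ s) / ρ s) := by
    intro s
    have hUd := hU.differentiable two_ne_zero
    have h1 := (hUd (r • e + s • v)).hasFDerivAt.hasDerivAt_comp_add_smul
    have h2 := (hUd (ρ s • e)).hasFDerivAt.hasDerivAt_comp_smul.comp s (hρ s)
    have heq : (fun s => U (r • e + s • v)) = fun s => U (ρ s • e) := funext fun s => by
      rw [apply_eq_apply_norm_smul hrad he, norm_smul_add_smul_of_inner_eq_zero he hv hev]
    rw [heq] at h1
    rw [h1.unique h2]
    ring
  have hu' : Differentiable ℝ u' := fun t => by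
    simpa using (hU.hasDerivAt_fderiv_apply_comp_add_smul 0 e e t).differentiableAt
  have hd : DifferentiableAt ℝ (fun s => u' (ρ s) / ρ s) 0 :=
    ((hu' _).comp 0 (hρ 0).differentiableAt).div (hρ 0).differentiableAt
      (by simp [hρ0, hr.ne'])
  have h1 := hU.hasDerivAt_fderiv_apply_comp_add_smul (r • e) v v 0
  simp only [zero_smul, add_zero, hline] at h1
  have h2 := (hasDerivAt_id 0).mul hd.hasDerivAt
  simpa [hρ0] using h1.unique h2

end Radial

section Euclidean

open EuclideanSpace

theorem lapR_smul_single_of_radial {N : ℕ} {U : EuclideanSpace ℝ (Fin N) → ℝ}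
    (hU : ContDiff ℝ 2 U) (hrad : ∀ x y : EuclideanSpace ℝ (Fin N), ‖x‖ = ‖y‖ → U x = U y)
    (i : Fin N) {r : ℝ} (hr : 0 < r) :
    lapR N U (r • single i 1) = fderiv ℝ (fderiv ℝ U) (r • single i 1) (single i 1) (single i 1)
      + (N - 1) * (fderiv ℝ U (r • single i 1) (single i 1) / r) := by
  have hoff : ∀ j ∈ ({i}ᶜ : Finset (Fin N)),
      fderiv ℝ (fderiv ℝ U) (r • single i 1) (single j 1) (single j 1) =
        fderiv ℝ U (r • single i 1) (single i 1) / r := by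
    intro j hj
    refine fderiv_fderiv_apply_of_inner_eq_zero hU hrad (by simp) (by simp) ?_ hr
    have hji : j ≠ i := by simpa using hj
    simp [inner_single_left, hji.symm]
  rw [lapR, Fintype.sum_eq_add_sum_compl i]
  simp only [iteratedFDeriv_two_apply, Matrix.cons_val_zero, Matrix.cons_val_one]
  rw [Finset.sum_congr rfl hoff, Finset.sum_const, nsmul_eq_mul, Finset.card_compl,
    Finset.card_singleton, Fintype.card_fin, Nat.cast_sub (Nat.one_le_of_lt i.isLt)]
  simp

theorem hasDerivAt_fderiv_smul_single_of_radial {N : ℕ} {U : EuclideanSpace ℝ (Fin N) → ℝ}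
    (hU : ContDiff ℝ 2 U) (hrad : ∀ x y : EuclideanSpace ℝ (Fin N), ‖x‖ = ‖y‖ → U x = U y)
    {f : ℝ → ℝ} (hsol : ∀ x, -lapR N U x = f (U x)) (i : Fin N) {r : ℝ} (hr : 0 < r) :
    HasDerivAt (fun t : ℝ => fderiv ℝ U (t • single i 1) (single i 1))
      (-f (U (r • single i 1)) - (N - 1) * fderiv ℝ U (r • single i 1) (single i 1) / r) r := by
  have h := hsol (r • single i 1)
  rw [lapR_smul_single_of_radial hU hrad i hr] at h
  have hd := hU.hasDerivAt_fderiv_apply_comp_add_smul 0 (single i 1) (single i 1) r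
  simp only [zero_add] at hd
  refine hd.congr_deriv ?_
  rw [mul_div_assoc]
  linarith

end Euclidean

theorem tendsto_smul_atTop_cocompact {E : Type*} [NormedAddCommGroup E] [NormedSpace ℝ E]
    [ProperSpace E] {e : E} (he : e ≠ 0) :
    Tendsto (fun r : ℝ => r • e) atTop (cocompact E) := by
  rw [← Metric.cobounded_eq_cocompact, ← tendsto_norm_atTop_iff_cobounded]
  simpa [norm_smul] using tendsto_abs_atTop_atTop.atTop_mul_const (norm_pos_iff.2 he)

theorem stmt_4_general (N : ℕ) (hN : 3 ≤ N) (W : ℝ → ℝ) (hW : ContDiff ℝ 1 W)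
    (hW0 : W 0 = 0) (hWpos : ∀ s : ℝ, 0 ≤ s → 0 ≤ W s)
    (ω : ℝ) (hω : ω ≤ 0)
    (U : EuclideanSpace ℝ (Fin N) → ℝ)
    (hUC2 : ContDiff ℝ 2 U)
    (hUnonneg : ∀ x, 0 ≤ U x)
    (hradial : ∀ x y : EuclideanSpace ℝ (Fin N), ‖x‖ = ‖y‖ → U x = U y)
    (hdecay : Tendsto U (cocompact (EuclideanSpace ℝ (Fin N))) (nhds 0))
    (hdecay' : Tendsto (fun x => ‖fderiv ℝ U x‖) (cocompact (EuclideanSpace ℝ (Fin N))) (nhds 0))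
    (heq : ∀ x, -lapR N U x + deriv W (U x) = 2 * ω * U x) :
    ∀ x, U x = 0 := by
  set i₀ : Fin N := ⟨0, by omega⟩
  set e : EuclideanSpace ℝ (Fin N) := EuclideanSpace.single i₀ 1
  have he : ‖e‖ = 1 := by simp [e]
  set u : ℝ → ℝ := fun r => U (r • e)
  set u' : ℝ → ℝ := fun r => fderiv ℝ U (r • e) e
  have hu : ∀ r, HasDerivAt u (u' r) r := fun r =>
    (hUC2.differentiable two_ne_zero _).hasFDerivAt.hasDerivAt_comp_smul
  have hu'_cont : Continuous u' :=
    ((hUC2.continuous_fderiv two_ne_zero).clm_apply continuous_const).comp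
      (continuous_id.smul continuous_const)
  have hcurve := tendsto_smul_atTop_cocompact (ne_zero_of_norm_ne_zero (he.symm ▸ one_ne_zero))
  have hu'_lim : Tendsto u' atTop (𝓝 0) :=
    squeeze_zero_norm (fun r => by simpa [he] using (fderiv ℝ U (r • e)).le_opNorm e)
      (hdecay'.comp hcurve)
  have hF : ∀ s, HasDerivAt (fun s => ω * s ^ 2 - W s) (2 * ω * s - deriv W s) s := fun s =>
    (((hasDerivAt_pow 2 s).const_mul ω).sub
      (hW.differentiable one_ne_zero s).hasDerivAt).congr_deriv (by ring)
  have hode := fun r (hr : 0 < r) => hasDerivAt_fderiv_smul_single_of_radial hUC2 hradial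
    (f := fun s => 2 * ω * s - deriv W s) (fun x => by linarith [heq x]) i₀ hr
  have hu'0 : u' 0 = 0 := (hu 0).eq_zero_of_even fun s => hradial _ _ (by simp [norm_smul])
  have hFu0 : ω * u 0 ^ 2 - W (u 0) ≤ 0 := by
    linarith [hWpos (u 0) (hUnonneg _), mul_nonpos_of_nonpos_of_nonneg hω (sq_nonneg (u 0))]
  have hN1 : (0 : ℝ) < N - 1 := by
    have : (3 : ℝ) ≤ N := mod_cast hN
    linarith
  have hzero := eqOn_zero_of_radial_ode hN1 hF (by simp [hW0]) hu hu'_cont.continuousOn hode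
    hu'0 hFu0 (hdecay.comp hcurve) hu'_lim
  intro x
  rw [apply_eq_apply_norm_smul hradial he x]
  exact hzero (norm_nonneg x)

/-- Pohozaev-type nonexistence: if `W ≥ 0`, `W(0) = 0`, `ω ≤ 0` and `U ∈ H¹ ∩ C²` is a
radial solution of `-ΔU + W'(U) = 2ωU` decaying at infinity together with its gradient,
then `U ≡ 0`. -/
theorem stmt_4 (N : ℕ) (hN : 3 ≤ N) (W : ℝ → ℝ) (hW : ContDiff ℝ 1 W)
    (hW0 : W 0 = 0) (hWpos : ∀ s : ℝ, 0 ≤ s → 0 ≤ W s)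
    (ω : ℝ) (hω : ω ≤ 0)
    (U : EuclideanSpace ℝ (Fin N) → ℝ)
    (hU2 : MemLp U 2 (volume : Measure (EuclideanSpace ℝ (Fin N))))
    (hUgrad : MemLp (fun x => ‖fderiv ℝ U x‖) 2 (volume : Measure (EuclideanSpace ℝ (Fin N))))
    (hUC2 : ContDiff ℝ 2 U)
    (hUnonneg : ∀ x, 0 ≤ U x)
    (hradial : ∀ x y : EuclideanSpace ℝ (Fin N), ‖x‖ = ‖y‖ → U x = U y)
    (hdecay : Tendsto U (cocompact (EuclideanSpace ℝ (Fin N))) (nhds 0))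
    (hdecay' : Tendsto (fun x => ‖fderiv ℝ U x‖) (cocompact (EuclideanSpace ℝ (Fin N))) (nhds 0))
    (heq : ∀ x, -lapR N U x + deriv W (U x) = 2 * ω * U x) :
    ∀ x, U x = 0 :=
  stmt_4_general N hN W hW hW0 hWpos ω hω U hUC2 hUnonneg hradial hdecay hdecay' heq
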